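/- arXiv:2605.11244 — 3 statements merged into one kernel-verified Lean document; each statement's English description precedes it below -/
import Mathlib

section
/- For a > 1/2, the function R(s) = B(s)·sqrt(a^2 - 1/4) / (a·sinh(2s)), where B(s) = sqrt(a·cosh(2s) - 1/2), is strictly decreasing on (0, ∞). Indeed its logarithmic derivative satisfies R'(s)/R(s) = -(a·cosh(2s)^2 - cosh(2s) + a) / (B(s)^2·sinh(2s)) < 0 for all s > 0. -/
theorem stmt_4 (a : ℝ) (ha : 1/2 < a)
    (B R : ℝ → ℝ)
    (hB : B = fun s => Real.sqrt (a * Real.cosh (2*s) - 1/2))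
    (hR : R = fun s => B s * Real.sqrt (a^2 - 1/4) / (a * Real.sinh (2*s))) :
    StrictAntiOn R (Set.Ioi 0) ∧
    ∀ s > (0:ℝ),
      deriv R s / R s
        = -(a * (Real.cosh (2*s))^2 - Real.cosh (2*s) + a) / ((B s)^2 * Real.sinh (2*s)) ∧
      deriv R s / R s < 0 := by
  have ha0 : (0:ℝ) < a := by linarith
  have ha4 : (0:ℝ) < a^2 - 1/4 := by nlinarith
  have hK : (0:ℝ) < Real.sqrt (a^2 - 1/4) := Real.sqrt_pos.mpr ha4
  set K := Real.sqrt (a^2 - 1/4) with hKdef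
  have key : ∀ s : ℝ, 0 < s →
      HasDerivAt R
        (-(a * (Real.cosh (2*s))^2 - Real.cosh (2*s) + a) * K /
          (a * B s * (Real.sinh (2*s))^2)) s
      ∧ 0 < R s ∧ 0 < B s ∧ (B s)^2 = a * Real.cosh (2*s) - 1/2
      ∧ 0 < Real.sinh (2*s) := by
    intro s hs
    have hsh : 0 < Real.sinh (2*s) := Real.sinh_pos_iff.mpr (by linarith)
    have hc1 : 1 ≤ Real.cosh (2*s) := Real.one_le_cosh _
    have hb2 : 0 < a * Real.cosh (2*s) - 1/2 := by nlinarith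
    have hbpos : 0 < B s := by rw [hB]; exact Real.sqrt_pos.mpr hb2
    have hBsq : (B s)^2 = a * Real.cosh (2*s) - 1/2 := by
      rw [hB]; exact Real.sq_sqrt hb2.le
    have hRpos : 0 < R s := by
      rw [hR]; positivity
    -- derivative of inner function
    have h2s : HasDerivAt (fun x : ℝ => 2*x) 2 s := by
      simpa using (hasDerivAt_id s).const_mul 2
    have hcosh : HasDerivAt (fun x : ℝ => Real.cosh (2*x)) (Real.sinh (2*s) * 2) s :=
      (Real.hasDerivAt_cosh (2*s)).comp s h2s
    have hsinh : HasDerivAt (fun x : ℝ => Real.sinh (2*x)) (Real.cosh (2*s) * 2) s :=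
      (Real.hasDerivAt_sinh (2*s)).comp s h2s
    have hinner : HasDerivAt (fun x : ℝ => a * Real.cosh (2*x) - 1/2)
        (a * (Real.sinh (2*s) * 2)) s := (hcosh.const_mul a).sub_const (1/2)
    have hBder : HasDerivAt B (1 / (2 * Real.sqrt (a * Real.cosh (2*s) - 1/2)) *
        (a * (Real.sinh (2*s) * 2))) s := by
      rw [hB]
      exact (Real.hasDerivAt_sqrt (ne_of_gt hb2)).comp s hinner
    have hnum : HasDerivAt (fun x => B x * K)
        (1 / (2 * Real.sqrt (a * Real.cosh (2*s) - 1/2)) *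
          (a * (Real.sinh (2*s) * 2)) * K) s := hBder.mul_const K
    have hden : HasDerivAt (fun x => a * Real.sinh (2*x)) (a * (Real.cosh (2*s) * 2)) s :=
      hsinh.const_mul a
    have hdne : a * Real.sinh (2*s) ≠ 0 := by positivity
    have hRder := hnum.div hden hdne
    rw [show ((fun x => B x * K) / fun x => a * Real.sinh (2 * x)) = R by rw [hR]; rfl] at hRder
    have hBval : Real.sqrt (a * Real.cosh (2*s) - 1/2) = B s := by rw [hB]
    have hsh2 : (Real.sinh (2*s))^2 = (Real.cosh (2*s))^2 - 1 := by
      have := Real.cosh_sq_sub_sinh_sq (2*s)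
      nlinarith [this]
    have hval : (1 / (2 * Real.sqrt (a * Real.cosh (2*s) - 1/2)) *
          (a * (Real.sinh (2*s) * 2)) * K * (a * Real.sinh (2*s)) -
          B s * K * (a * (Real.cosh (2*s) * 2))) / (a * Real.sinh (2*s))^2
        = -(a * (Real.cosh (2*s))^2 - Real.cosh (2*s) + a) * K /
          (a * B s * (Real.sinh (2*s))^2) := by
      rw [hBval]
      have hbne : B s ≠ 0 := ne_of_gt hbpos
      have hshne : Real.sinh (2*s) ≠ 0 := ne_of_gt hsh
      field_simp
      linear_combination (-2*Real.cosh (2*s)) * hBsq +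
        a * hsh2
    rw [hval] at hRder
    exact ⟨hRder, hRpos, hbpos, hBsq, hsh⟩
  have hderiv_neg : ∀ s : ℝ, 0 < s → deriv R s < 0 := by
    intro s hs
    obtain ⟨hd, hRpos, hbpos, hBsq, hsh⟩ := key s hs
    rw [hd.deriv]
    have hc1 : 1 ≤ Real.cosh (2*s) := Real.one_le_cosh _
    have hpos : 0 < a * (Real.cosh (2*s))^2 - Real.cosh (2*s) + a := by
      nlinarith [sq_nonneg (2*a*Real.cosh (2*s) - 1)]
    have hden : 0 < a * B s * (Real.sinh (2*s))^2 := by positivity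
    have : -(a * (Real.cosh (2*s))^2 - Real.cosh (2*s) + a) * K < 0 := by nlinarith
    exact div_neg_of_neg_of_pos this hden
  constructor
  · apply StrictAntiOn.mono (strictAntiOn_of_deriv_neg (convex_Ioi 0) ?_ ?_) le_rfl
    · intro s hs
      exact ((key s hs).1.continuousAt).continuousWithinAt
    · intro s hs
      rw [interior_Ioi] at hs
      exact hderiv_neg s hs
  · intro s hs
    obtain ⟨hd, hRpos, hbpos, hBsq, hsh⟩ := key s hs
    have hdn := hderiv_neg s hs
    constructor
    · rw [hd.deriv, hR]
      simp only
      have hbne : B s ≠ 0 := ne_of_gt hbpos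
      have hshne : Real.sinh (2*s) ≠ 0 := ne_of_gt hsh
      have hKne : K ≠ 0 := ne_of_gt hK
      have hane : a ≠ 0 := ne_of_gt ha0
      field_simp
    · exact div_neg_of_neg_of_pos hdn hRpos
end

section
/- The improper integral ∫₀^∞ cosh(2t)^{-3/2} dt converges and equals Γ(3/4)^2 / sqrt(2π). -/
open Real MeasureTheory Set

noncomputable def fsub (t : ℝ) : ℝ := (Real.cosh (2*t) ^ 2)⁻¹
noncomputable def fsub' (t : ℝ) : ℝ := -(4 * Real.sinh (2*t)) / Real.cosh (2*t) ^ 3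
noncomputable def gfun (x : ℝ) : ℝ := (1/4) * (x ^ (-(1:ℝ)/4) * (1-x) ^ (-(1:ℝ)/2))

lemma hderiv (t : ℝ) : HasDerivAt fsub (fsub' t) t := by
  have h1 : HasDerivAt (fun t : ℝ => Real.cosh (2*t)) (Real.sinh (2*t) * 2) t := by
    have h0 : HasDerivAt (fun x : ℝ => 2 * x) 2 t := by simpa using (hasDerivAt_id' t).const_mul (2:ℝ)
    exact (Real.hasDerivAt_cosh (2*t)).comp t h0
  have h2 := (h1.pow 2).inv (by positivity : Real.cosh (2*t) ^ 2 ≠ 0)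
  refine h2.congr_deriv ?_
  have hc := (Real.cosh_pos (2*t)).ne'
  simp only [fsub', Pi.pow_apply]
  field_simp [fsub']
  ring

lemma hinj : InjOn fsub (Ioi (0:ℝ)) := by
  intro a ha b hb h
  simp only [fsub, inv_inj] at h
  have h' : Real.cosh (2*a) = Real.cosh (2*b) := by
    nlinarith [Real.cosh_pos (2*a), Real.cosh_pos (2*b)]
  have h1 : ¬ |2*a| < |2*b| := by rw [← Real.cosh_lt_cosh]; exact h'.not_lt
  have h2 : ¬ |2*b| < |2*a| := by rw [← Real.cosh_lt_cosh]; exact h'.symm.not_lt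
  have ha' : (0:ℝ) < a := ha
  have hb' : (0:ℝ) < b := hb
  rw [abs_of_pos (by linarith), abs_of_pos (by linarith)] at h1 h2
  linarith

lemma himg : fsub '' Ioi (0:ℝ) = Ioo 0 1 := by
  ext y
  constructor
  · rintro ⟨t, ht, rfl⟩
    have ht' : (0:ℝ) < t := ht
    have hc : 1 < Real.cosh (2*t) := Real.one_lt_cosh.mpr (by positivity)
    have : 1 < Real.cosh (2*t) ^ 2 := by nlinarith
    constructor
    · exact inv_pos.mpr (pow_pos (Real.cosh_pos _) 2)
    · rw [fsub]
      exact inv_lt_one_of_one_lt₀ this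
  · rintro ⟨hy0, hy1⟩
    refine ⟨Real.arsinh (Real.sqrt (y⁻¹ - 1)) / 2, ?_, ?_⟩
    · have : 1 < y⁻¹ := (one_lt_inv₀ hy0).mpr hy1
      have : 0 < Real.sqrt (y⁻¹ - 1) := Real.sqrt_pos.mpr (by linarith)
      have h3 := Real.arsinh_pos_iff.mpr this
      exact Set.mem_Ioi.mpr (div_pos h3 two_pos)
    · have h1 : 1 ≤ y⁻¹ := le_of_lt ((one_lt_inv₀ hy0).mpr hy1)
      simp only [fsub]
      rw [mul_div_cancel₀ _ (two_ne_zero), Real.cosh_sq, Real.sinh_arsinh,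
        Real.sq_sqrt (by linarith)]
      rw [sub_add_cancel, inv_inv]

lemma hEq : ∀ t ∈ Ioi (0:ℝ), |fsub' t| • gfun (fsub t) = Real.cosh (2*t) ^ (-(3:ℝ)/2) := by
  intro t ht
  have ht' : (0:ℝ) < t := ht
  set c := Real.cosh (2*t) with hc
  set s := Real.sinh (2*t) with hs
  have hcpos : 0 < c := Real.cosh_pos _
  have hspos : 0 < s := Real.sinh_pos_iff.mpr (by positivity)
  have hsq : s^2 = c^2 - 1 := by
    have := Real.cosh_sq (2*t); rw [← hc, ← hs] at this; linarith
  have habs : |fsub' t| = 4 * s / c^3 := by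
    rw [fsub', ← hc, ← hs, abs_div, abs_neg, abs_of_pos (by positivity),
      abs_of_pos (by positivity)]
  rw [habs, smul_eq_mul, gfun, fsub, ← hc]
  have e1 : ((c^2)⁻¹ : ℝ) ^ (-(1:ℝ)/4) = c ^ ((1:ℝ)/2) := by
    rw [← Real.rpow_natCast c 2, ← Real.rpow_neg_one (c ^ ((2:ℕ):ℝ)),
      ← Real.rpow_mul hcpos.le, ← Real.rpow_mul hcpos.le]
    norm_num
  have e2 : (1 - ((c^2)⁻¹ : ℝ)) = s^2 / c^2 := by
    field_simp
    linarith
  have e3 : ((s^2 / c^2 : ℝ)) ^ (-(1:ℝ)/2) = c / s := by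
    have : (s^2 / c^2 : ℝ) = (s/c)^2 := by ring
    rw [this, ← Real.rpow_natCast (s/c) 2, ← Real.rpow_mul (by positivity)]
    norm_num
    rw [Real.rpow_neg_one]
    simp
  rw [e1, e2, e3]
  have e4 : c ^ (-(3:ℝ)/2) = c ^ ((1:ℝ)/2) / c^2 := by
    rw [← Real.rpow_natCast c 2, ← Real.rpow_sub hcpos]
    norm_num
  rw [e4]
  field_simp

lemma hbeta_c : Complex.betaIntegral (3/4) (1/2)
    = ((∫ x in Ioo (0:ℝ) 1, x ^ (-(1:ℝ)/4) * (1-x) ^ (-(1:ℝ)/2) : ℝ) : ℂ) := by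
  rw [Complex.betaIntegral, intervalIntegral.integral_of_le (by norm_num : (0:ℝ) ≤ 1),
    MeasureTheory.integral_Ioc_eq_integral_Ioo]
  have step : ∀ x ∈ Ioo (0:ℝ) 1, (x:ℂ) ^ ((3:ℂ)/4 - 1) * ((1:ℂ) - x) ^ ((1:ℂ)/2 - 1)
      = (((x ^ (-(1:ℝ)/4) * (1-x) ^ (-(1:ℝ)/2) : ℝ)) : ℂ) := by
    intro x hx
    obtain ⟨hx0, hx1⟩ := hx
    rw [show ((3:ℂ)/4 - 1) = ((-(1:ℝ)/4 : ℝ) : ℂ) by norm_num,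
      show ((1:ℂ)/2 - 1) = ((-(1:ℝ)/2 : ℝ) : ℂ) by norm_num,
      show ((1:ℂ) - x) = (((1 - x : ℝ)) : ℂ) by push_cast; ring,
      ← Complex.ofReal_cpow hx0.le, ← Complex.ofReal_cpow (by linarith),
      ← Complex.ofReal_mul]
  rw [setIntegral_congr_fun measurableSet_Ioo step]
  exact integral_ofReal

lemma hJ : ∫ x in Ioo (0:ℝ) 1, x ^ (-(1:ℝ)/4) * (1-x) ^ (-(1:ℝ)/2)
    = Real.Gamma (3/4) * Real.Gamma (1/2) / Real.Gamma (5/4) := by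
  have h := Complex.Gamma_mul_Gamma_eq_betaIntegral
    (s := 3/4) (t := 1/2) (by norm_num) (by norm_num)
  rw [hbeta_c] at h
  have h54 : Real.Gamma (5/4) ≠ 0 := (Real.Gamma_pos_of_pos (by norm_num)).ne'
  have c1 : Complex.Gamma (3/4) = (Real.Gamma (3/4) : ℂ) := by
    rw [show ((3:ℂ)/4) = ((3/4 : ℝ) : ℂ) by norm_num, Complex.Gamma_ofReal]
  have c2 : Complex.Gamma (1/2) = (Real.Gamma (1/2) : ℂ) := by
    rw [show ((1:ℂ)/2) = ((1/2 : ℝ) : ℂ) by norm_num, Complex.Gamma_ofReal]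
  have c3 : Complex.Gamma (3/4 + 1/2) = (Real.Gamma (5/4) : ℂ) := by
    rw [show ((3:ℂ)/4 + 1/2) = ((5/4 : ℝ) : ℂ) by norm_num, Complex.Gamma_ofReal]
  rw [c1, c2, c3] at h
  have hr : Real.Gamma (3/4) * Real.Gamma (1/2)
      = Real.Gamma (5/4) * ∫ x in Ioo (0:ℝ) 1, x ^ (-(1:ℝ)/4) * (1-x) ^ (-(1:ℝ)/2) := by
    exact_mod_cast h
  rw [eq_div_iff h54, mul_comm]
  exact hr.symm

lemma hint_real : IntegrableOn (fun x : ℝ => x ^ (-(1:ℝ)/4) * (1-x) ^ (-(1:ℝ)/2)) (Ioo 0 1) := by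
  have h := Complex.betaIntegral_convergent (u := 3/4) (v := 1/2) (by norm_num) (by norm_num)
  have h2 : IntegrableOn (fun x : ℝ => (x:ℂ) ^ ((3:ℂ)/4 - 1) * ((1:ℂ) - x) ^ ((1:ℂ)/2 - 1))
      (Ioo 0 1) := ((intervalIntegrable_iff_integrableOn_Ioc_of_le (by norm_num)).mp h).mono_set
      Ioo_subset_Ioc_self
  have h3 := h2.norm
  refine IntegrableOn.congr_fun h3 (fun x hx => ?_) measurableSet_Ioo
  obtain ⟨hx0, hx1⟩ := hx
  rw [show ((3:ℂ)/4 - 1) = ((-(1:ℝ)/4 : ℝ) : ℂ) by norm_num,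
    show ((1:ℂ)/2 - 1) = ((-(1:ℝ)/2 : ℝ) : ℂ) by norm_num,
    ← Complex.ofReal_cpow hx0.le, show ((1:ℂ) - x) = (((1 - x : ℝ)) : ℂ) by push_cast; ring,
    ← Complex.ofReal_cpow (by linarith), ← Complex.ofReal_mul, Complex.norm_real]
  rw [Real.norm_eq_abs, abs_of_nonneg (mul_nonneg (Real.rpow_nonneg hx0.le _) (Real.rpow_nonneg (by linarith) _))]


theorem gamma_arith :
    (1/4 : ℝ) * (Real.Gamma (3/4) * Real.Gamma (1/2) / Real.Gamma (5/4))
      = (Real.Gamma (3/4))^2 / Real.sqrt (2 * Real.pi) := by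
  have hG3 : 0 < Real.Gamma (3/4) := Real.Gamma_pos_of_pos (by norm_num)
  have hG1 : 0 < Real.Gamma (1/4) := Real.Gamma_pos_of_pos (by norm_num)
  have h12 : Real.Gamma (1/2) = Real.sqrt π := Real.Gamma_one_half_eq
  have h54 : Real.Gamma (5/4) = (1/4) * Real.Gamma (1/4) := by
    rw [show (5/4 : ℝ) = 1/4 + 1 by norm_num, Real.Gamma_add_one (by norm_num)]
  have hrefl : Real.Gamma (1/4) * Real.Gamma (3/4) = Real.sqrt 2 * π := by
    have h := Real.Gamma_mul_Gamma_one_sub (1/4)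
    rw [show (1 - 1/4 : ℝ) = 3/4 by norm_num, show (π * (1/4) : ℝ) = π/4 by ring,
      Real.sin_pi_div_four] at h
    have h2 : Real.sqrt 2 * Real.sqrt 2 = 2 := Real.mul_self_sqrt (by norm_num)
    have h2p : (0:ℝ) < Real.sqrt 2 := by positivity
    rw [h, div_eq_iff (by positivity)]
    linear_combination (-(π/2)) * (Real.sq_sqrt (by norm_num : (0:ℝ) ≤ 2))
  have hsqrt : Real.sqrt (2*π) = Real.sqrt 2 * Real.sqrt π := Real.sqrt_mul (by norm_num) _
  have hpi : Real.sqrt π * Real.sqrt π = π := Real.mul_self_sqrt pi_pos.le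
  have hG1eq : Real.Gamma (1/4) = Real.sqrt 2 * π / Real.Gamma (3/4) := by
    rw [eq_div_iff hG3.ne']; exact hrefl
  rw [h12, h54, hG1eq, hsqrt]
  have h2 : (0:ℝ) < Real.sqrt 2 := by positivity
  have h3 : (0:ℝ) < Real.sqrt π := Real.sqrt_pos.mpr pi_pos
  field_simp
  linear_combination hpi

theorem stmt_6 :
    IntegrableOn (fun t : ℝ => (Real.cosh (2*t)) ^ (-(3:ℝ)/2)) (Set.Ioi 0) ∧
    ∫ t in Set.Ioi (0:ℝ), (Real.cosh (2*t)) ^ (-(3:ℝ)/2)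
      = (Real.Gamma (3/4))^2 / Real.sqrt (2 * Real.pi) := by
  have hint_g : IntegrableOn gfun (Ioo 0 1) := by
    exact hint_real.const_mul (1/4 : ℝ)
  have key_iff := integrableOn_image_iff_integrableOn_abs_deriv_smul measurableSet_Ioi
    (fun x _ => (hderiv x).hasDerivWithinAt) hinj gfun
  rw [himg] at key_iff
  have h1 : IntegrableOn (fun t => |fsub' t| • gfun (fsub t)) (Ioi 0) := key_iff.mp hint_g
  have hI : IntegrableOn (fun t : ℝ => Real.cosh (2*t) ^ (-(3:ℝ)/2)) (Ioi 0) :=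
    h1.congr_fun hEq measurableSet_Ioi
  refine ⟨hI, ?_⟩
  have e1 : ∫ t in Ioi (0:ℝ), Real.cosh (2*t) ^ (-(3:ℝ)/2)
      = ∫ t in Ioi (0:ℝ), |fsub' t| • gfun (fsub t) :=
    (setIntegral_congr_fun measurableSet_Ioi hEq).symm
  have e2 : ∫ x in Ioo (0:ℝ) 1, gfun x = ∫ t in Ioi (0:ℝ), |fsub' t| • gfun (fsub t) := by
    rw [← himg]
    exact integral_image_eq_integral_abs_deriv_smul measurableSet_Ioi
      (fun x _ => (hderiv x).hasDerivWithinAt) hinj gfun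
  have e3 : ∫ x in Ioo (0:ℝ) 1, gfun x
      = (1/4 : ℝ) * ∫ x in Ioo (0:ℝ) 1, x ^ (-(1:ℝ)/4) * (1-x) ^ (-(1:ℝ)/2) := by
    rw [← integral_const_mul]
    rfl
  rw [e1, ← e2, e3, hJ, gamma_arith]
end

section
/- Let B : [-s₀, s₀] → ℝ be positive and continuous, let q be continuous, and let f, g be C² solutions on [-s₀, s₀] of the self-adjoint ODE (B·u')' + B·q·u = 0. If both f and g satisfy the Robin conditions u'(s₀) = c·u(s₀) and u'(-s₀) = -c·u(-s₀) for the same constant c, and if f is odd with f'(0) ≠ 0 while g is even, then g ≡ 0. -/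
open Set Real

theorem stmt_17 (s₀ c : ℝ) (hs₀ : 0 < s₀)
    (B q f g : ℝ → ℝ)
    (hBpos : ∀ s ∈ Set.Icc (-s₀) s₀, 0 < B s)
    (hBc : ContDiff ℝ 1 B)
    (hq : Continuous q)
    (hf : ContDiff ℝ 2 f) (hg : ContDiff ℝ 2 g)
    (hODEf : ∀ s ∈ Set.Icc (-s₀) s₀,
      deriv (fun t => B t * deriv f t) s + B s * q s * f s = 0)
    (hODEg : ∀ s ∈ Set.Icc (-s₀) s₀,
      deriv (fun t => B t * deriv g t) s + B s * q s * g s = 0)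
    (hRf₁ : deriv f s₀ = c * f s₀) (hRf₂ : deriv f (-s₀) = -c * f (-s₀))
    (hRg₁ : deriv g s₀ = c * g s₀) (hRg₂ : deriv g (-s₀) = -c * g (-s₀))
    (hfodd : ∀ s ∈ Set.Icc (-s₀) s₀, f (-s) = -f s)
    (hf'0 : deriv f 0 ≠ 0)
    (hgeven : ∀ s ∈ Set.Icc (-s₀) s₀, g (-s) = g s) :
    ∀ s ∈ Set.Icc (-s₀) s₀, g s = 0 := by
  have h0mem : (0:ℝ) ∈ Icc (-s₀) s₀ := ⟨by linarith, by linarith⟩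
  -- regularity
  have hfd : Differentiable ℝ f := hf.differentiable (by norm_num)
  have hgd : Differentiable ℝ g := hg.differentiable (by norm_num)
  have hBd : Differentiable ℝ B := hBc.differentiable one_ne_zero
  have hf2 : ContDiff ℝ ((1:WithTop ℕ∞) + 1) f := by norm_num at hf ⊢; exact hf
  have hg2 : ContDiff ℝ ((1:WithTop ℕ∞) + 1) g := by norm_num at hg ⊢; exact hg
  have hf'c : ContDiff ℝ 1 (deriv f) := (contDiff_succ_iff_deriv.mp hf2).2.2
  have hg'c : ContDiff ℝ 1 (deriv g) := (contDiff_succ_iff_deriv.mp hg2).2.2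
  have hf'd : Differentiable ℝ (deriv f) := hf'c.differentiable one_ne_zero
  have hg'd : Differentiable ℝ (deriv g) := hg'c.differentiable one_ne_zero
  have hPd : Differentiable ℝ (fun t => B t * deriv f t) := hBd.mul hf'd
  have hQd : Differentiable ℝ (fun t => B t * deriv g t) := hBd.mul hg'd
  -- the function Φ = B * Wronskian
  set Φ : ℝ → ℝ := fun t => f t * (B t * deriv g t) - g t * (B t * deriv f t) with hΦ
  have hΦderiv : ∀ t ∈ Icc (-s₀) s₀, HasDerivAt Φ 0 t := by
    intro t ht
    have eQ : deriv (fun t => B t * deriv g t) t = -(B t * q t * g t) := by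
      have := hODEg t ht; linarith
    have eP : deriv (fun t => B t * deriv f t) t = -(B t * q t * f t) := by
      have := hODEf t ht; linarith
    have hQ : HasDerivAt (fun t => B t * deriv g t) (-(B t * q t * g t)) t :=
      eQ ▸ (hQd t).hasDerivAt
    have hP : HasDerivAt (fun t => B t * deriv f t) (-(B t * q t * f t)) t :=
      eP ▸ (hPd t).hasDerivAt
    have h := ((hfd t).hasDerivAt.mul hQ).sub ((hgd t).hasDerivAt.mul hP)
    exact h.congr_deriv (by ring)
  -- Φ is constant, and Φ(-s₀) = 0 by the Robin condition
  have hΦcont : ContinuousOn Φ (Icc (-s₀) s₀) :=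
    ((hfd.continuous.mul (hBd.continuous.mul hg'd.continuous)).sub
      (hgd.continuous.mul (hBd.continuous.mul hf'd.continuous))).continuousOn
  have hΦconst : ∀ s ∈ Icc (-s₀) s₀, Φ s = Φ (-s₀) :=
    constant_of_has_deriv_right_zero hΦcont
      (fun x hx => (hΦderiv x (Ico_subset_Icc_self hx)).hasDerivWithinAt)
  have hΦa : Φ (-s₀) = 0 := by
    simp only [hΦ, hRf₂, hRg₂]; ring
  have hΦzero : ∀ s ∈ Icc (-s₀) s₀, Φ s = 0 := fun s hs => (hΦconst s hs).trans hΦa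
  -- f 0 = 0
  have hf0 : f 0 = 0 := by
    have := hfodd 0 h0mem
    simp only [neg_zero] at this; linarith
  -- deriv g 0 = 0 by evenness
  have hg'0 : deriv g 0 = 0 := by
    have hnb : Icc (-s₀) s₀ ∈ nhds (0:ℝ) := Icc_mem_nhds (by linarith) hs₀
    have hev : (fun s => g (-s)) =ᶠ[nhds (0:ℝ)] g := by
      filter_upwards [hnb] with s hs using hgeven s hs
    have h1 : deriv (fun s => g (-s)) 0 = deriv g 0 := hev.deriv_eq
    have h2 : HasDerivAt (fun s => g (-s)) (deriv g (-(0:ℝ)) * (-1)) 0 :=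
      (hgd (-(0:ℝ))).hasDerivAt.comp 0 (hasDerivAt_neg 0)
    have h3 : deriv (fun s => g (-s)) 0 = -deriv g 0 := by
      simpa using h2.deriv
    rw [h3] at h1; linarith
  -- g 0 = 0 from the vanishing Wronskian at 0
  have hB0 : 0 < B 0 := hBpos 0 h0mem
  have hg0 : g 0 = 0 := by
    have := hΦzero 0 h0mem
    simp only [hΦ, hf0, hg'0, mul_zero, zero_mul, zero_sub, neg_eq_zero] at this
    rcases mul_eq_zero.mp this with h | h
    · exact h
    · exact absurd (mul_eq_zero.mp h) (by push_neg; exact ⟨ne_of_gt hB0, hf'0⟩)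
  -- ODE uniqueness: set up first-order system
  set pr : ℝ → ℝ := fun t => max (-s₀) (min s₀ t) with hpr
  have hprmem : ∀ t, pr t ∈ Icc (-s₀) s₀ := fun t =>
    ⟨le_max_left _ _, max_le (by linarith) (min_le_left _ _)⟩
  have hpreq : ∀ t ∈ Icc (-s₀) s₀, pr t = t := by
    intro t ht
    simp only [hpr]
    rw [min_eq_right ht.2, max_eq_right ht.1]
  -- a uniform bound
  obtain ⟨t₁, ht₁, hmax⟩ := isCompact_Icc.exists_isMaxOn (f := fun y => max ((B y)⁻¹) |B y * q y|)
      ⟨0, h0mem⟩ (ContinuousOn.sup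
        (ContinuousOn.inv₀ hBd.continuous.continuousOn (fun x hx => ne_of_gt (hBpos x hx)))
        ((hBd.continuous.mul hq).abs).continuousOn)
  have hM : ∀ y ∈ Icc (-s₀) s₀,
      max ((B y)⁻¹) |B y * q y| ≤ max ((B t₁)⁻¹) |B t₁ * q t₁| := fun y hy => hmax hy
  set M : ℝ := max ((B t₁)⁻¹) |B t₁ * q t₁| with hMdef
  have hMpos : 0 < M := lt_of_lt_of_le (inv_pos.mpr (hBpos t₁ ht₁)) (le_max_left _ _)
  have hbnd1 : ∀ t, (B (pr t))⁻¹ ≤ M := fun t =>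
    le_trans (le_max_left _ _) (hM _ (hprmem t))
  have hbnd1' : ∀ t, |(B (pr t))⁻¹| ≤ M := by
    intro t
    rw [abs_of_pos (inv_pos.mpr (hBpos _ (hprmem t)))]
    exact hbnd1 t
  have hbnd2 : ∀ t, |B (pr t) * q (pr t)| ≤ M := fun t =>
    le_trans (le_max_right _ _) (hM _ (hprmem t))
  -- the vector field
  set v : ℝ → ℝ × ℝ → ℝ × ℝ :=
    fun t x => ((B (pr t))⁻¹ * x.2, -(B (pr t) * q (pr t)) * x.1) with hv
  have hlip : ∀ t, LipschitzWith M.toNNReal (v t) := by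
    intro t
    apply LipschitzWith.of_dist_le_mul
    intro x y
    rw [Real.coe_toNNReal _ hMpos.le]
    simp only [hv, Prod.dist_eq]
    apply max_le
    · rw [Real.dist_eq, ← mul_sub, abs_mul]
      calc |(B (pr t))⁻¹| * |x.2 - y.2| ≤ M * |x.2 - y.2| :=
            mul_le_mul_of_nonneg_right (hbnd1' t) (abs_nonneg _)
        _ ≤ M * max (dist x.1 y.1) (dist x.2 y.2) := by
            apply mul_le_mul_of_nonneg_left _ hMpos.le
            rw [Real.dist_eq]; exact le_max_right _ _
    · rw [Real.dist_eq, ← mul_sub, abs_mul, abs_neg]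
      calc |B (pr t) * q (pr t)| * |x.1 - y.1| ≤ M * |x.1 - y.1| :=
            mul_le_mul_of_nonneg_right (hbnd2 t) (abs_nonneg _)
        _ ≤ M * max (dist x.1 y.1) (dist x.2 y.2) := by
            apply mul_le_mul_of_nonneg_left _ hMpos.le
            rw [Real.dist_eq]; exact le_max_left _ _
  -- the two solutions
  set F : ℝ → ℝ × ℝ := fun t => (g t, B t * deriv g t) with hF
  set G : ℝ → ℝ × ℝ := fun _ => ((0:ℝ), (0:ℝ)) with hG
  have hFcont : ContinuousOn F (Icc (-s₀) s₀) :=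
    (hgd.continuous.prodMk (hBd.continuous.mul hg'd.continuous)).continuousOn
  have hF' : ∀ t ∈ Ioo (-s₀) s₀, HasDerivAt F (v t (F t)) t := by
    intro t ht
    have htI : t ∈ Icc (-s₀) s₀ := Ioo_subset_Icc_self ht
    have hBt : B t ≠ 0 := ne_of_gt (hBpos t htI)
    have eQ : deriv (fun t => B t * deriv g t) t = -(B t * q t * g t) := by
      have := hODEg t htI; linarith
    have hQ : HasDerivAt (fun t => B t * deriv g t) (-(B t * q t * g t)) t :=
      eQ ▸ (hQd t).hasDerivAt
    have h := HasDerivAt.prodMk (hgd t).hasDerivAt hQ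
    have : v t (F t) = (deriv g t, -(B t * q t * g t)) := by
      simp only [hv, hF, hpreq t htI, Prod.mk.injEq]
      constructor
      · field_simp
      · ring
    rw [this]
    exact h
  have hG' : ∀ t ∈ Ioo (-s₀) s₀, HasDerivAt G (v t (G t)) t := by
    intro t _
    have : v t (G t) = ((0:ℝ), (0:ℝ)) := by simp [hv, hG]
    rw [this]
    exact hasDerivAt_const t _
  have heq : F 0 = G 0 := by
    simp [hF, hG, hg0, hg'0]
  have huniq : EqOn F G (Icc (-s₀) s₀) :=
    ODE_solution_unique_of_mem_Icc (s := fun _ => (univ : Set (ℝ × ℝ)))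
      (fun t _ => (hlip t).lipschitzOnWith)
      ⟨neg_lt_zero.mpr hs₀, hs₀⟩ hFcont hF' (fun _ _ => mem_univ _)
      continuousOn_const hG' (fun _ _ => mem_univ _) heq
  intro s hs
  have := huniq hs
  simpa [hF, hG] using congrArg Prod.fst this
end
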